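/- arXiv:1711.05220 — 8 statements merged into one kernel-verified Lean document; each statement's English description precedes it below -/
import Mathlib

section
/- Let N ≤ L and let M ∈ ℂ^{N×L} admit a singular value decomposition M = U Σ Vᴴ, where U is an N×N unitary matrix, V is an L×L unitary matrix, and Σ is a real N×L matrix with Σ_{ij} = 0 for i ≠ j and Σ_{ii} ≥ 0 for all i. Then for every X ∈ ℂ^{N×L} with X Xᴴ = I_N one has Re tr(Xᴴ M) ≤ ∑_{i=1}^{N} Σ_{ii}; moreover the matrix X* = U I_{N×L} Vᴴ satisfies X* X*ᴴ = I_N and achieves equality, Re tr(X*ᴴ M) = ∑_{i=1}^{N} Σ_{ii}. -/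
/-!
Writing `Y = Uᴴ X V`, cyclicity of the trace turns `tr (Xᴴ M)` into `tr (Yᴴ Σ)`, and `Y` still
has orthonormal rows. Since `Σ` is diagonal, `Re tr (Yᴴ Σ) = ∑ᵢ Re Yᵢᵢ · σᵢ`, and every entry of a
matrix with orthonormal rows has norm at most `1`. For `X = U I_{N×L} Vᴴ` one gets `Y = I_{N×L}`,
whose diagonal is all ones.
-/

open Matrix

/-- The `N × L` rectangular "identity": ones on the main diagonal, zeros elsewhere. -/
def rectId (N L : ℕ) : Matrix (Fin N) (Fin L) ℂ :=
  Matrix.of fun i j => if (i : ℕ) = (j : ℕ) then 1 else 0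

namespace Matrix

theorem mul_mul_conjTranspose_eq_one {l m n p α : Type*} [Fintype m] [Fintype n] [Fintype p]
    [DecidableEq l] [DecidableEq m] [DecidableEq n] [Semiring α] [StarRing α]
    {A : Matrix l m α} {X : Matrix m n α} {B : Matrix n p α}
    (hA : A * Aᴴ = 1) (hX : X * Xᴴ = 1) (hB : B * Bᴴ = 1) :
    A * X * B * (A * X * B)ᴴ = 1 := by
  simp only [conjTranspose_mul, Matrix.mul_assoc]
  rw [← Matrix.mul_assoc B, hB, Matrix.one_mul, ← Matrix.mul_assoc X, hX, Matrix.one_mul, hA]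

theorem trace_conjTranspose_mul_mul_mul {l m n p α : Type*} [Fintype l] [Fintype m]
    [Fintype n] [Fintype p] [CommSemiring α] [StarRing α]
    (X : Matrix l n α) (U : Matrix l m α) (S : Matrix m p α) (V : Matrix n p α) :
    trace (Xᴴ * (U * S * Vᴴ)) = trace ((Uᴴ * X * V)ᴴ * S) := by
  simp only [conjTranspose_mul, conjTranspose_conjTranspose]
  rw [← Matrix.mul_assoc, Matrix.trace_mul_comm]
  simp only [Matrix.mul_assoc]

theorem norm_apply_le_one_of_mul_conjTranspose_eq_one {m n 𝕜 : Type*} [Fintype n]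
    [DecidableEq m] [RCLike 𝕜] {Y : Matrix m n 𝕜} (hY : Y * Yᴴ = 1) (i : m) (j : n) :
    ‖Y i j‖ ≤ 1 := by
  have hrow : ∑ k, ‖Y i k‖ ^ 2 = (1 : ℝ) := by
    have h := congrFun (congrFun hY i) i
    rw [mul_apply, one_apply_eq] at h
    simp only [conjTranspose_apply, RCLike.star_def, RCLike.mul_conj] at h
    exact_mod_cast h
  have : ‖Y i j‖ ^ 2 ≤ 1 :=
    hrow ▸ Finset.single_le_sum (fun k _ => sq_nonneg ‖Y i k‖) (Finset.mem_univ j)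
  exact (sq_le_one_iff₀ (norm_nonneg _)).mp this

end Matrix

section RectangularDiagonal

variable {N L : ℕ}

theorem re_trace_conjTranspose_mul_map_ofReal (hNL : N ≤ L) (Y : Matrix (Fin N) (Fin L) ℂ)
    {Sig : Matrix (Fin N) (Fin L) ℝ}
    (hSigOff : ∀ (i : Fin N) (j : Fin L), (i : ℕ) ≠ (j : ℕ) → Sig i j = 0) :
    (trace (Yᴴ * Sig.map (fun x => (x : ℂ)))).re =
      ∑ i, (Y i (Fin.castLE hNL i)).re * Sig i (Fin.castLE hNL i) := by
  rw [trace_mul_comm, trace, Complex.re_sum]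
  refine Finset.sum_congr rfl fun i _ => ?_
  rw [diag_apply, mul_apply, Finset.sum_eq_single (Fin.castLE hNL i)]
  · simp [mul_comm]
  · intro j _ hj
    rw [map_apply, hSigOff i j (fun h => hj (Fin.ext h.symm)), Complex.ofReal_zero, zero_mul]
  · simp

theorem re_trace_conjTranspose_mul_map_ofReal_le (hNL : N ≤ L) {Y : Matrix (Fin N) (Fin L) ℂ}
    (hY : Y * Yᴴ = 1) {Sig : Matrix (Fin N) (Fin L) ℝ}
    (hSigOff : ∀ (i : Fin N) (j : Fin L), (i : ℕ) ≠ (j : ℕ) → Sig i j = 0)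
    (hSigDiag : ∀ i : Fin N, 0 ≤ Sig i (Fin.castLE hNL i)) :
    (trace (Yᴴ * Sig.map (fun x => (x : ℂ)))).re ≤ ∑ i, Sig i (Fin.castLE hNL i) := by
  rw [re_trace_conjTranspose_mul_map_ofReal hNL Y hSigOff]
  refine Finset.sum_le_sum fun i _ => mul_le_of_le_one_left (hSigDiag i) ?_
  exact (Complex.re_le_norm _).trans (norm_apply_le_one_of_mul_conjTranspose_eq_one hY _ _)

theorem re_trace_conjTranspose_rectId_mul_map_ofReal (hNL : N ≤ L)
    {Sig : Matrix (Fin N) (Fin L) ℝ}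
    (hSigOff : ∀ (i : Fin N) (j : Fin L), (i : ℕ) ≠ (j : ℕ) → Sig i j = 0) :
    (trace ((rectId N L)ᴴ * Sig.map (fun x => (x : ℂ)))).re = ∑ i, Sig i (Fin.castLE hNL i) := by
  rw [re_trace_conjTranspose_mul_map_ofReal hNL _ hSigOff]
  simp [rectId]

theorem rectId_mul_conjTranspose_rectId (hNL : N ≤ L) : rectId N L * (rectId N L)ᴴ = 1 := by
  ext i k
  rw [mul_apply, Finset.sum_eq_single (Fin.castLE hNL i)]
  · simp [rectId, one_apply, Fin.ext_iff, eq_comm]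
  · intro j _ hj
    have hij : (i : ℕ) ≠ j := fun h => hj (Fin.ext h.symm)
    simp [rectId, hij]
  · simp

end RectangularDiagonal

theorem stmt1 {N L : ℕ} (hNL : N ≤ L) (M : Matrix (Fin N) (Fin L) ℂ)
    (U : Matrix (Fin N) (Fin N) ℂ) (V : Matrix (Fin L) (Fin L) ℂ)
    (Sig : Matrix (Fin N) (Fin L) ℝ)
    (hU₁ : U * Uᴴ = 1) (hU₂ : Uᴴ * U = 1)
    (hV₁ : V * Vᴴ = 1) (hV₂ : Vᴴ * V = 1)
    (hSigOff : ∀ (i : Fin N) (j : Fin L), (i : ℕ) ≠ (j : ℕ) → Sig i j = 0)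
    (hSigDiag : ∀ i : Fin N, 0 ≤ Sig i (Fin.castLE hNL i))
    (hSVD : M = U * Sig.map (fun x => (x : ℂ)) * Vᴴ) :
    (∀ X : Matrix (Fin N) (Fin L) ℂ, X * Xᴴ = 1 →
      (Matrix.trace (Xᴴ * M)).re ≤ ∑ i : Fin N, Sig i (Fin.castLE hNL i)) ∧
    (U * rectId N L * Vᴴ) * (U * rectId N L * Vᴴ)ᴴ = 1 ∧
    (Matrix.trace ((U * rectId N L * Vᴴ)ᴴ * M)).re = ∑ i : Fin N, Sig i (Fin.castLE hNL i) := by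
  subst hSVD
  refine ⟨fun X hX => ?_, ?_, ?_⟩
  · rw [trace_conjTranspose_mul_mul_mul]
    have hY :=
      mul_mul_conjTranspose_eq_one (A := Uᴴ) (by rwa [conjTranspose_conjTranspose]) hX hV₁
    exact re_trace_conjTranspose_mul_map_ofReal_le hNL hY hSigOff hSigDiag
  · exact mul_mul_conjTranspose_eq_one hU₁ (rectId_mul_conjTranspose_rectId hNL)
      (by rwa [conjTranspose_conjTranspose])
  · have hR : Uᴴ * (U * rectId N L * Vᴴ) * V = rectId N L := by
      simp only [Matrix.mul_assoc, hV₂, Matrix.mul_one, ← Matrix.mul_assoc Uᴴ, hU₂, Matrix.one_mul]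
    rw [trace_conjTranspose_mul_mul_mul, hR,
      re_trace_conjTranspose_rectId_mul_map_ofReal hNL hSigOff]
end

section
/- Let H ∈ ℂ^{K×N}, S ∈ ℂ^{K×L} with N ≤ L, and let R_d ∈ ℂ^{N×N} be Hermitian positive definite with a factorization R_d = F Fᴴ where F ∈ ℂ^{N×N} is invertible. Suppose Fᴴ Hᴴ S admits a singular value decomposition Fᴴ Hᴴ S = Ũ Σ̃ Ṽᴴ with Ũ an N×N unitary matrix, Ṽ an L×L unitary matrix, and Σ̃ a real N×L matrix with Σ̃_{ij} = 0 for i ≠ j and Σ̃_{ii} ≥ 0. Then X* = √L · F Ũ I_{N×L} Ṽᴴ satisfies (1/L) X* X*ᴴ = R_d, and for every X ∈ ℂ^{N×L} with (1/L) X Xᴴ = R_d one has ‖H X* − S‖_F ≤ ‖H X − S‖_F. That is, X* is a global minimizer of the MUI energy under the directional beampattern constraint (1/L) X Xᴴ = R_d. -/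
/-!
On the constraint set `‖H X‖_F² = tr(Hᴴ H X Xᴴ) = L tr(Hᴴ H R_d)` is constant, so minimising
`‖H X − S‖_F²` amounts to maximising `Re tr(Sᴴ H X)`. The SVD turns this into `Re tr(Σ̃ᴴ W)` for
`W = Ũᴴ F⁻¹ X Ṽ` (`svdCoord`), and the constraint into `W Wᴴ = L I`. Every entry of such a `W`
has modulus at most `√L`, so `Re tr(Σ̃ᴴ W) = ∑ σᵢ Re Wᵢᵢ ≤ √L ∑ σᵢ`, with equality for
`W = √L I_{N×L}`, i.e. for `X = X*`.
-/

open Matrix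
open scoped ComplexOrder

/-- Squared Frobenius norm of a complex matrix: `‖M‖_F² = Re tr(Mᴴ M)`. -/
noncomputable def frobSq {m n : ℕ} (M : Matrix (Fin m) (Fin n) ℂ) : ℝ :=
  (Matrix.trace (Mᴴ * M)).re

/-- Frobenius norm. -/
noncomputable def frobNorm {m n : ℕ} (M : Matrix (Fin m) (Fin n) ℂ) : ℝ :=
  Real.sqrt (frobSq M)

lemma norm_apply_le_sqrt_of_mul_conjTranspose_eq_smul_one {m n : Type*} [Fintype n]
    [DecidableEq m] {W : Matrix m n ℂ} {c : ℝ} (hW : W * Wᴴ = (c : ℂ) • 1) (i : m) (j : n) :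
    ‖W i j‖ ≤ √c := by
  have hrow : ∑ k, ‖W i k‖ ^ 2 = c := by
    have := congrFun (congrFun hW i) i
    simp only [mul_apply, conjTranspose_apply, Matrix.smul_apply, one_apply_eq, smul_eq_mul,
      mul_one, Complex.star_def, Complex.mul_conj'] at this
    exact_mod_cast this
  refine Real.le_sqrt_of_sq_le (hrow ▸ ?_)
  exact Finset.single_le_sum (fun k _ => sq_nonneg ‖W i k‖) (Finset.mem_univ j)

lemma smul_sqrt_mul_conjTranspose_smul_sqrt {m n : Type*} [Fintype n] {c : ℝ} (hc : 0 ≤ c)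
    (M : Matrix m n ℂ) : (√c • M) * (√c • M)ᴴ = (c : ℂ) • (M * Mᴴ) := by
  rw [conjTranspose_smul, star_trivial, Matrix.smul_mul, Matrix.mul_smul, smul_smul,
    Real.mul_self_sqrt hc, Complex.coe_smul]

lemma rectId_mul_conjTranspose {N L : ℕ} (h : N ≤ L) : rectId N L * (rectId N L)ᴴ = 1 := by
  ext i j
  simp only [mul_apply, rectId, conjTranspose_apply, of_apply, one_apply]
  rw [Finset.sum_eq_single (Fin.castLE h i)]
  · by_cases hij : i = j
    · simp [hij]
    · simp [Fin.val_eq_val, if_neg hij, eq_comm]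
  · intro k _ hk
    have : (i : ℕ) ≠ k := fun hik => hk (Fin.ext hik.symm)
    simp [this]
  · simp

section SVDCoordinates

variable {m n : Type*} [Fintype m] [Fintype n] [DecidableEq n]

noncomputable def svdCoord (F U : Matrix n n ℂ) (V : Matrix m m ℂ) (X : Matrix n m ℂ) :
    Matrix n m ℂ :=
  Uᴴ * F⁻¹ * X * V

lemma svdCoord_mul_conjTranspose [DecidableEq m] {F U : Matrix n n ℂ} {V : Matrix m m ℂ}
    (hF : IsUnit F) (hU : Uᴴ * U = 1) (hV : V * Vᴴ = 1) {X : Matrix n m ℂ} {c : ℂ}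
    (hX : X * Xᴴ = c • (F * Fᴴ)) : svdCoord F U V X * (svdCoord F U V X)ᴴ = c • 1 := by
  have hF₁ : F⁻¹ * F = 1 := nonsing_inv_mul F ((isUnit_iff_isUnit_det F).mp hF)
  have hF₂ : Fᴴ * F⁻¹ᴴ = 1 := by rw [← conjTranspose_mul, hF₁, conjTranspose_one]
  calc svdCoord F U V X * (svdCoord F U V X)ᴴ = Uᴴ * F⁻¹ * (X * Xᴴ) * F⁻¹ᴴ * U := by
        simp only [svdCoord, conjTranspose_mul, conjTranspose_conjTranspose, Matrix.mul_assoc]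
        rw [← Matrix.mul_assoc V, hV, Matrix.one_mul]
    _ = c • (Uᴴ * (F⁻¹ * F) * (Fᴴ * F⁻¹ᴴ) * U) := by
        simp only [hX, Matrix.mul_smul, Matrix.smul_mul, Matrix.mul_assoc]
    _ = c • 1 := by rw [hF₁, hF₂, Matrix.mul_one, Matrix.mul_one, hU]

lemma svdCoord_smul_mul_mul_mul [DecidableEq m] {F U : Matrix n n ℂ} {V : Matrix m m ℂ}
    (hF : IsUnit F) (hU : Uᴴ * U = 1) (hV : Vᴴ * V = 1) (a : ℝ) (B : Matrix n m ℂ) :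
    svdCoord F U V (a • (F * U * B * Vᴴ)) = a • B := by
  have hF₁ : F⁻¹ * F = 1 := nonsing_inv_mul F ((isUnit_iff_isUnit_det F).mp hF)
  simp only [svdCoord, Matrix.mul_smul, Matrix.smul_mul, Matrix.mul_assoc]
  rw [hV, Matrix.mul_one, ← Matrix.mul_assoc F⁻¹, hF₁, Matrix.one_mul, ← Matrix.mul_assoc, hU,
    Matrix.one_mul]

lemma trace_conjTranspose_mul_mul_of_svd {p : Type*} [Fintype p] {H : Matrix p n ℂ}
    {S : Matrix p m ℂ} {F U : Matrix n n ℂ} {V : Matrix m m ℂ} {Sig : Matrix n m ℂ}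
    (hF : IsUnit F) (hSVD : Fᴴ * Hᴴ * S = U * Sig * Vᴴ) (X : Matrix n m ℂ) :
    trace (Sᴴ * (H * X)) = trace (Sigᴴ * svdCoord F U V X) := by
  have hHS : Hᴴ * S = F⁻¹ᴴ * (U * Sig * Vᴴ) := by
    rw [← hSVD, Matrix.mul_assoc, ← Matrix.mul_assoc F⁻¹ᴴ, ← conjTranspose_mul,
      mul_nonsing_inv F ((isUnit_iff_isUnit_det F).mp hF), conjTranspose_one, Matrix.one_mul]
  have hSH : Sᴴ * H = V * (Sigᴴ * Uᴴ * F⁻¹) := by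
    rw [← conjTranspose_conjTranspose H, ← conjTranspose_mul, hHS]
    simp only [conjTranspose_mul, conjTranspose_conjTranspose, conjTranspose_nonsing_inv,
      Matrix.mul_assoc]
  rw [← Matrix.mul_assoc, hSH, Matrix.mul_assoc, trace_mul_comm]
  simp only [svdCoord, Matrix.mul_assoc]

end SVDCoordinates

lemma mul_mul_mul_conjTranspose_mul_mul_mul {m n : Type*} [Fintype m] [Fintype n]
    [DecidableEq m] [DecidableEq n] {F U : Matrix n n ℂ} {V : Matrix m m ℂ} {B : Matrix n m ℂ}
    (hB : B * Bᴴ = 1) (hU : U * Uᴴ = 1) (hV : Vᴴ * V = 1) :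
    (F * U * B * Vᴴ) * (F * U * B * Vᴴ)ᴴ = F * Fᴴ := by
  simp only [conjTranspose_mul, conjTranspose_conjTranspose, Matrix.mul_assoc]
  rw [← Matrix.mul_assoc Vᴴ, hV, Matrix.one_mul, ← Matrix.mul_assoc B, hB, Matrix.one_mul,
    ← Matrix.mul_assoc U, hU, Matrix.one_mul]

section RectDiagonal

variable {N L : ℕ} (hNL : N ≤ L) {Sig : Matrix (Fin N) (Fin L) ℝ}

lemma trace_conjTranspose_map_ofReal_mul
    (hSigOff : ∀ (i : Fin N) (j : Fin L), (i : ℕ) ≠ (j : ℕ) → Sig i j = 0)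
    (W : Matrix (Fin N) (Fin L) ℂ) :
    trace ((Sig.map (fun x => (x : ℂ)))ᴴ * W) =
      ∑ i, (Sig i (Fin.castLE hNL i) : ℂ) * W i (Fin.castLE hNL i) := by
  simp only [trace, diag, mul_apply, conjTranspose_apply, map_apply, Complex.star_def,
    Complex.conj_ofReal]
  rw [Finset.sum_comm]
  refine Finset.sum_congr rfl fun i _ => Finset.sum_eq_single _ (fun j _ hj => ?_) (by simp)
  have : (i : ℕ) ≠ j := fun hij => hj (Fin.ext hij.symm)
  simp [hSigOff i j this]

lemma re_trace_conjTranspose_map_ofReal_mul_le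
    (hSigOff : ∀ (i : Fin N) (j : Fin L), (i : ℕ) ≠ (j : ℕ) → Sig i j = 0)
    (hSigDiag : ∀ i : Fin N, 0 ≤ Sig i (Fin.castLE hNL i))
    {W : Matrix (Fin N) (Fin L) ℂ} {c : ℝ} (hW : W * Wᴴ = (c : ℂ) • 1) :
    (trace ((Sig.map (fun x => (x : ℂ)))ᴴ * W)).re ≤
      (trace ((Sig.map (fun x => (x : ℂ)))ᴴ * (√c • rectId N L))).re := by
  rw [trace_conjTranspose_map_ofReal_mul hNL hSigOff,
    trace_conjTranspose_map_ofReal_mul hNL hSigOff, Complex.re_sum, Complex.re_sum]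
  refine Finset.sum_le_sum fun i _ => ?_
  simp only [Matrix.smul_apply, rectId, of_apply, Fin.val_castLE, if_true, Complex.real_smul,
    mul_one, Complex.re_ofReal_mul, Complex.ofReal_re]
  exact mul_le_mul_of_nonneg_left
    ((Complex.re_le_norm _).trans (norm_apply_le_sqrt_of_mul_conjTranspose_eq_smul_one hW _ _))
    (hSigDiag i)

end RectDiagonal

lemma frobSq_sub {m n : ℕ} (A B : Matrix (Fin m) (Fin n) ℂ) :
    frobSq (A - B) = frobSq A - 2 * (trace (Bᴴ * A)).re + frobSq B := by
  have h : trace (Aᴴ * B) = star (trace (Bᴴ * A)) := by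
    rw [← trace_conjTranspose, conjTranspose_mul, conjTranspose_conjTranspose]
  simp only [frobSq, conjTranspose_sub, Matrix.sub_mul, Matrix.mul_sub, trace_sub,
    Complex.sub_re, h, Complex.star_def, Complex.conj_re]
  ring

lemma frobSq_mul {k m n : ℕ} (H : Matrix (Fin k) (Fin m) ℂ) (X : Matrix (Fin m) (Fin n) ℂ) :
    frobSq (H * X) = (trace (Hᴴ * H * (X * Xᴴ))).re := by
  rw [frobSq, conjTranspose_mul, Matrix.mul_assoc, trace_mul_comm]
  simp only [Matrix.mul_assoc]

theorem frobSq_mul_smul_sqrt_sub_le {K N L : ℕ} (hNL : N ≤ L)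
    {H : Matrix (Fin K) (Fin N) ℂ} {S : Matrix (Fin K) (Fin L) ℂ} {F U : Matrix (Fin N) (Fin N) ℂ}
    {V : Matrix (Fin L) (Fin L) ℂ} {Sig : Matrix (Fin N) (Fin L) ℝ} (hF : IsUnit F)
    (hU₁ : U * Uᴴ = 1) (hU₂ : Uᴴ * U = 1) (hV₁ : V * Vᴴ = 1) (hV₂ : Vᴴ * V = 1)
    (hSigOff : ∀ (i : Fin N) (j : Fin L), (i : ℕ) ≠ (j : ℕ) → Sig i j = 0)
    (hSigDiag : ∀ i : Fin N, 0 ≤ Sig i (Fin.castLE hNL i))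
    (hSVD : Fᴴ * Hᴴ * S = U * Sig.map (fun x => (x : ℂ)) * Vᴴ) {c : ℝ} (hc : 0 ≤ c)
    {X : Matrix (Fin N) (Fin L) ℂ} (hX : X * Xᴴ = (c : ℂ) • (F * Fᴴ)) :
    frobSq (H * (√c • (F * U * rectId N L * Vᴴ)) - S) ≤ frobSq (H * X - S) := by
  set Xs := √c • (F * U * rectId N L * Vᴴ)
  have hXs : Xs * Xsᴴ = (c : ℂ) • (F * Fᴴ) := by
    rw [smul_sqrt_mul_conjTranspose_smul_sqrt hc,
      mul_mul_mul_conjTranspose_mul_mul_mul (rectId_mul_conjTranspose hNL) hU₁ hV₂]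
  have hcorr : (trace (Sᴴ * (H * X))).re ≤ (trace (Sᴴ * (H * Xs))).re := by
    rw [trace_conjTranspose_mul_mul_of_svd hF hSVD, trace_conjTranspose_mul_mul_of_svd hF hSVD,
      svdCoord_smul_mul_mul_mul hF hU₂ hV₂]
    exact re_trace_conjTranspose_map_ofReal_mul_le hNL hSigOff hSigDiag
      (svdCoord_mul_conjTranspose hF hU₂ hV₁ hX)
  rw [frobSq_sub, frobSq_sub, frobSq_mul, frobSq_mul, hX, hXs]
  linarith

theorem stmt3_general {K N L : ℕ} (hNL : N ≤ L)
    (H : Matrix (Fin K) (Fin N) ℂ) (S : Matrix (Fin K) (Fin L) ℂ)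
    (Rd F : Matrix (Fin N) (Fin N) ℂ)
    (hF : IsUnit F) (hFact : Rd = F * Fᴴ)
    (U : Matrix (Fin N) (Fin N) ℂ) (V : Matrix (Fin L) (Fin L) ℂ)
    (Sig : Matrix (Fin N) (Fin L) ℝ)
    (hU₁ : U * Uᴴ = 1) (hU₂ : Uᴴ * U = 1)
    (hV₁ : V * Vᴴ = 1) (hV₂ : Vᴴ * V = 1)
    (hSigOff : ∀ (i : Fin N) (j : Fin L), (i : ℕ) ≠ (j : ℕ) → Sig i j = 0)
    (hSigDiag : ∀ i : Fin N, 0 ≤ Sig i (Fin.castLE hNL i))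
    (hSVD : Fᴴ * Hᴴ * S = U * Sig.map (fun x => (x : ℂ)) * Vᴴ) :
    (((L : ℂ))⁻¹ • ((Real.sqrt L • (F * U * rectId N L * Vᴴ)) *
        (Real.sqrt L • (F * U * rectId N L * Vᴴ))ᴴ) = Rd) ∧
    ∀ X : Matrix (Fin N) (Fin L) ℂ,
      ((L : ℂ))⁻¹ • (X * Xᴴ) = Rd →
      frobNorm (H * (Real.sqrt L • (F * U * rectId N L * Vᴴ)) - S) ≤
        frobNorm (H * X - S) := by
  rcases Nat.eq_zero_or_pos L with rfl | hL
  · obtain rfl := Nat.le_zero.mp hNL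
    exact ⟨Subsingleton.elim _ _, fun X _ => le_of_eq (congrArg frobNorm (Subsingleton.elim _ _))⟩
  have hLc : (L : ℂ) ≠ 0 := by exact_mod_cast hL.ne'
  refine ⟨?_, fun X hX => Real.sqrt_le_sqrt (frobSq_mul_smul_sqrt_sub_le hNL hF hU₁ hU₂ hV₁ hV₂
    hSigOff hSigDiag hSVD L.cast_nonneg ?_)⟩
  · rw [smul_sqrt_mul_conjTranspose_smul_sqrt L.cast_nonneg,
      mul_mul_mul_conjTranspose_mul_mul_mul (rectId_mul_conjTranspose hNL) hU₁ hV₂,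
      Complex.ofReal_natCast, inv_smul_smul₀ hLc, hFact]
  · rw [Complex.ofReal_natCast, ← hFact, ← hX, smul_inv_smul₀ hLc]

theorem stmt3 {K N L : ℕ} (hNL : N ≤ L)
    (H : Matrix (Fin K) (Fin N) ℂ) (S : Matrix (Fin K) (Fin L) ℂ)
    (Rd F : Matrix (Fin N) (Fin N) ℂ)
    (hRd : Rd.PosDef) (hF : IsUnit F) (hFact : Rd = F * Fᴴ)
    (U : Matrix (Fin N) (Fin N) ℂ) (V : Matrix (Fin L) (Fin L) ℂ)
    (Sig : Matrix (Fin N) (Fin L) ℝ)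
    (hU₁ : U * Uᴴ = 1) (hU₂ : Uᴴ * U = 1)
    (hV₁ : V * Vᴴ = 1) (hV₂ : Vᴴ * V = 1)
    (hSigOff : ∀ (i : Fin N) (j : Fin L), (i : ℕ) ≠ (j : ℕ) → Sig i j = 0)
    (hSigDiag : ∀ i : Fin N, 0 ≤ Sig i (Fin.castLE hNL i))
    (hSVD : Fᴴ * Hᴴ * S = U * Sig.map (fun x => (x : ℂ)) * Vᴴ) :
    (((L : ℂ))⁻¹ • ((Real.sqrt L • (F * U * rectId N L * Vᴴ)) *
        (Real.sqrt L • (F * U * rectId N L * Vᴴ))ᴴ) = Rd) ∧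
    ∀ X : Matrix (Fin N) (Fin L) ℂ,
      ((L : ℂ))⁻¹ • (X * Xᴴ) = Rd →
      frobNorm (H * (Real.sqrt L • (F * U * rectId N L * Vᴴ)) - S) ≤
        frobNorm (H * X - S) :=
  stmt3_general hNL H S Rd F hF hFact U V Sig hU₁ hU₂ hV₁ hV₂ hSigOff hSigDiag hSVD
end

section
/- Let Q ∈ ℂ^{N×N} be Hermitian, G ∈ ℂ^{N×L}, c > 0, and suppose there exist λ ∈ ℝ and X ∈ ℂ^{N×L} such that (Q + λ I_N) X = G, ‖X‖_F² = c, and Q + λ I_N is positive semidefinite. Then X is a global minimizer of the trust-region subproblem: for every Y ∈ ℂ^{N×L} with ‖Y‖_F² = c, Re tr(Xᴴ Q X) − 2 Re tr(Xᴴ G) ≤ Re tr(Yᴴ Q Y) − 2 Re tr(Yᴴ G). -/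
open Matrix
open scoped ComplexOrder

/-!
Write `A := Q + λ I`. Since `A X = G`, completing the square gives
`Re tr(Yᴴ A Y) - 2 Re tr(Yᴴ G) = Re tr((Y - X)ᴴ A (Y - X)) - Re tr(Xᴴ A X)`,
so `A ⪰ 0` makes `X` an unconstrained minimiser of the objective built from `A`.
That objective differs from the one built from `Q` by `λ ‖Y‖_F²`, which is constant on the
sphere `‖Y‖_F² = c`.
-/

namespace Matrix

variable {𝕜 : Type*} [RCLike 𝕜] {n l : Type*} [Fintype n] [Fintype l]

noncomputable def trObjective (Q : Matrix n n 𝕜) (G Y : Matrix n l 𝕜) : ℝ :=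
  RCLike.re (Yᴴ * Q * Y).trace - 2 * RCLike.re (Yᴴ * G).trace

theorem IsHermitian.re_trace_conjTranspose_mul_mul_comm {A : Matrix n n 𝕜} (hA : A.IsHermitian)
    (X Y : Matrix n l 𝕜) : RCLike.re (Xᴴ * A * Y).trace = RCLike.re (Yᴴ * A * X).trace := by
  have hadj : (Xᴴ * A * Y)ᴴ = Yᴴ * A * X := by
    simp only [conjTranspose_mul, conjTranspose_conjTranspose, hA.eq, Matrix.mul_assoc]
  rw [← hadj, trace_conjTranspose, RCLike.star_def, RCLike.conj_re]

theorem PosSemidef.re_trace_conjTranspose_mul_mul_nonneg {A : Matrix n n 𝕜} (hA : A.PosSemidef)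
    (Z : Matrix n l 𝕜) : 0 ≤ RCLike.re (Zᴴ * A * Z).trace :=
  (RCLike.nonneg_iff.mp (hA.conjTranspose_mul_mul_same Z).trace_nonneg).1

theorem IsHermitian.re_trace_sub_conjTranspose_mul_mul_sub {A : Matrix n n 𝕜}
    (hA : A.IsHermitian) (X Y : Matrix n l 𝕜) :
    RCLike.re ((Y - X)ᴴ * A * (Y - X)).trace =
      RCLike.re (Yᴴ * A * Y).trace - 2 * RCLike.re (Yᴴ * A * X).trace +
        RCLike.re (Xᴴ * A * X).trace := by
  simp only [conjTranspose_sub, Matrix.sub_mul, Matrix.mul_sub, trace_sub, map_sub,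
    hA.re_trace_conjTranspose_mul_mul_comm X Y]
  ring

theorem PosSemidef.trObjective_le {A : Matrix n n 𝕜} (hA : A.PosSemidef) {G X : Matrix n l 𝕜}
    (hX : A * X = G) (Y : Matrix n l 𝕜) : trObjective A G X ≤ trObjective A G Y := by
  have hsq := hA.isHermitian.re_trace_sub_conjTranspose_mul_mul_sub X Y
  have hnonneg := hA.re_trace_conjTranspose_mul_mul_nonneg (Y - X)
  simp only [trObjective, ← hX, ← Matrix.mul_assoc]
  linarith

theorem trObjective_add_smul_one [DecidableEq n] (Q : Matrix n n 𝕜) (lam : 𝕜) (G Y : Matrix n l 𝕜) :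
    trObjective (Q + lam • 1) G Y =
      trObjective Q G Y + RCLike.re (lam * (Yᴴ * Y).trace) := by
  simp only [trObjective, Matrix.mul_add, Matrix.add_mul, Matrix.mul_smul, Matrix.smul_mul,
    Matrix.mul_one, trace_add, trace_smul, smul_eq_mul, map_add]
  ring

end Matrix

theorem stmt5_general {N L : ℕ} (Q : Matrix (Fin N) (Fin N) ℂ) (G : Matrix (Fin N) (Fin L) ℂ)
    (c : ℝ) (lam : ℝ) (X : Matrix (Fin N) (Fin L) ℂ)
    (hstat : (Q + (lam : ℂ) • 1) * X = G)
    (hfeas : frobSq X = c)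
    (hpsd : (Q + (lam : ℂ) • 1).PosSemidef) :
    ∀ Y : Matrix (Fin N) (Fin L) ℂ, frobSq Y = c →
      (Matrix.trace (Xᴴ * Q * X)).re - 2 * (Matrix.trace (Xᴴ * G)).re ≤
        (Matrix.trace (Yᴴ * Q * Y)).re - 2 * (Matrix.trace (Yᴴ * G)).re := by
  intro Y hY
  have hmin := hpsd.trObjective_le hstat Y
  have hshift (Z : Matrix (Fin N) (Fin L) ℂ) :
      trObjective (Q + (lam : ℂ) • 1) G Z = trObjective Q G Z + lam * frobSq Z := by
    rw [trObjective_add_smul_one, frobSq, RCLike.re_to_complex, Complex.re_ofReal_mul]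
  rw [hshift, hshift, hfeas, hY, add_le_add_iff_right] at hmin
  simpa only [trObjective, RCLike.re_to_complex] using hmin

theorem stmt5 {N L : ℕ} (Q : Matrix (Fin N) (Fin N) ℂ) (G : Matrix (Fin N) (Fin L) ℂ)
    (hQ : Q.IsHermitian) (c : ℝ) (hc : 0 < c) (lam : ℝ) (X : Matrix (Fin N) (Fin L) ℂ)
    (hstat : (Q + (lam : ℂ) • 1) * X = G)
    (hfeas : frobSq X = c)
    (hpsd : (Q + (lam : ℂ) • 1).PosSemidef) :
    ∀ Y : Matrix (Fin N) (Fin L) ℂ, frobSq Y = c →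
      (Matrix.trace (Xᴴ * Q * X)).re - 2 * (Matrix.trace (Xᴴ * G)).re ≤
        (Matrix.trace (Yᴴ * Q * Y)).re - 2 * (Matrix.trace (Yᴴ * G)).re :=
  stmt5_general Q G c lam X hstat hfeas hpsd
end

section
/- Let l, u ∈ ℝ with 0 < u − l < π. Then the convex hull (over ℝ) of the arc arc(l,u) = {e^{it} : t ∈ [l, u]} ⊆ ℂ equals the circular segment { x ∈ ℂ : |x| ≤ 1 and Re( conj(x) · (e^{iu} + e^{il})/2 ) ≥ cos²((u − l)/2) }. -/
/-- The arc `{e^{it} : t ∈ [l, u]}` on the unit circle. -/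
noncomputable def arc (l u : ℝ) : Set ℂ :=
  (fun t : ℝ => Complex.exp (Complex.I * t)) '' Set.Icc l u

/-!
Rotating by `e^{-i(l+u)/2}` reduces the theorem to the symmetric arc `{e^{it} : |t| ≤ δ}` with
`δ = (u - l)/2`, and the sum-to-product formula `e^{iu} + e^{il} = 2 cos δ e^{i(l+u)/2}` turns the
condition on `x` into `Re (conj x e^{i(l+u)/2}) ≥ cos δ`. So it suffices that the hull of the
symmetric arc is `{y : |y| ≤ 1, Re y ≥ cos δ}`. This set is convex and contains the arc.
Conversely, a point `y = a + bi` of it has `|b| ≤ sin δ`, so `cos δ + bi` lies on the chord between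
`e^{∓iδ}`, and `y` lies on the horizontal segment from that point to the arc point `e^{i arcsin b}`.
-/

open Complex Set

lemma add_smul_mem_segment {𝕜 E : Type*} [Field 𝕜] [LinearOrder 𝕜] [IsStrictOrderedRing 𝕜]
    [AddCommGroup E] [Module 𝕜 E] (z v : E) {a a₁ a₂ : 𝕜} (ha : a ∈ Icc a₁ a₂) :
    z + a • v ∈ segment 𝕜 (z + a₁ • v) (z + a₂ • v) := by
  have key := image_segment 𝕜 (AffineMap.lineMap z (z + v)) a₁ a₂
  simp only [AffineMap.lineMap_apply, vsub_eq_sub, vadd_eq_add, add_sub_cancel_left,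
    add_comm _ z] at key
  rw [← key, segment_eq_Icc (ha.1.trans ha.2)]
  exact ⟨a, ha, by simp [AffineMap.lineMap_apply, add_comm]⟩

lemma exp_I_mul_ofReal_eq_cos_add_sin (t : ℝ) :
    exp (I * t) = (Real.cos t : ℂ) + Real.sin t • I := by
  rw [mul_comm, exp_mul_I, real_smul, ofReal_cos, ofReal_sin]

lemma arc_add (l u c : ℝ) : arc (l + c) (u + c) = (exp (I * c) * ·) '' arc l u := by
  rw [arc, arc, ← image_add_const_Icc, image_image, image_image]
  congr 1; funext t
  rw [← exp_add]; push_cast; ring_nf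

lemma exp_I_mul_add_exp_I_mul (l u : ℝ) :
    exp (I * u) + exp (I * l) = 2 * Real.cos ((u - l) / 2) * exp (I * ((l + u) / 2 : ℝ)) := by
  rw [ofReal_cos, two_cos, add_mul, ← exp_add, ← exp_add]
  congr 2 <;> push_cast <;> ring

/-- The part of the closed unit disc where `Re (conj x * w) ≥ c`; for `‖w‖ = 1` this is the circular
segment cut off by the chord orthogonal to `w` at distance `c` from the origin. -/
def circularSegment (w : ℂ) (c : ℝ) : Set ℂ :=
  {x | ‖x‖ ≤ 1 ∧ c ≤ (starRingEnd ℂ x * w).re}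

lemma mem_circularSegment_one {c : ℝ} {x : ℂ} :
    x ∈ circularSegment 1 c ↔ ‖x‖ ≤ 1 ∧ c ≤ x.re := by
  simp [circularSegment]

lemma convex_circularSegment (w : ℂ) (c : ℝ) : Convex ℝ (circularSegment w c) := by
  have hlin : IsLinearMap ℝ fun x : ℂ => (starRingEnd ℂ x * w).re :=
    ⟨fun x y => by simp [add_mul], fun a x => by simp [real_smul, mul_assoc]⟩
  have hinter :
      circularSegment w c = Metric.closedBall 0 1 ∩ {x | c ≤ (starRingEnd ℂ x * w).re} := by
    ext x; simp [circularSegment]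
  rw [hinter]
  exact (convex_closedBall 0 1).inter (convex_halfSpace_ge hlin c)

lemma image_mul_circularSegment {w : ℂ} (hw : ‖w‖ = 1) (v : ℂ) (c : ℝ) :
    (w * ·) '' circularSegment v c = circularSegment (w * v) c := by
  have hww : starRingEnd ℂ w * w = 1 := by
    rw [mul_comm, mul_conj, normSq_eq_norm_sq, hw]; simp
  ext x
  constructor
  · rintro ⟨y, ⟨hy, hyc⟩, rfl⟩
    refine ⟨by rwa [norm_mul, hw, one_mul], ?_⟩
    calc c ≤ (starRingEnd ℂ y * v).re := hyc
      _ = (starRingEnd ℂ (w * y) * (w * v)).re := by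
        rw [map_mul, mul_mul_mul_comm, hww, one_mul]
  · rintro ⟨hx, hxc⟩
    refine ⟨starRingEnd ℂ w * x, ⟨?_, ?_⟩, ?_⟩
    · rwa [norm_mul, norm_conj, hw, one_mul]
    · rw [map_mul, conj_conj]; convert hxc using 2; ring
    · change w * (starRingEnd ℂ w * x) = x
      rw [← mul_assoc, mul_comm w, hww, one_mul]

lemma circularSegment_ofReal_mul {k : ℝ} (hk : 0 < k) (w : ℂ) (c : ℝ) :
    circularSegment (k * w) (k * c) = circularSegment w c := by
  ext x
  simp only [circularSegment, mem_ofPred_eq, mul_left_comm _ (k : ℂ), re_ofReal_mul,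
    mul_le_mul_iff_right₀ hk]

section SymmetricArc

variable {δ : ℝ}

lemma arc_subset_circularSegment_one (hδ : δ ≤ Real.pi) :
    arc (-δ) δ ⊆ circularSegment 1 (Real.cos δ) := by
  rintro _ ⟨t, ht, rfl⟩
  refine mem_circularSegment_one.mpr ⟨(norm_exp_I_mul_ofReal t).le, ?_⟩
  change Real.cos δ ≤ (exp (I * t)).re
  rw [mul_comm, exp_ofReal_mul_I_re, ← Real.cos_abs t]
  exact Real.cos_le_cos_of_nonneg_of_le_pi (abs_nonneg t) hδ (abs_le.mpr ht)

lemma circularSegment_one_subset_convexHull_arc (hδ₀ : 0 ≤ δ) (hδ : δ ≤ Real.pi / 2) :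
    circularSegment 1 (Real.cos δ) ⊆ convexHull ℝ (arc (-δ) δ) := by
  intro y hy
  obtain ⟨hy, hyre⟩ := mem_circularSegment_one.mp hy
  set K := convexHull ℝ (arc (-δ) δ)
  have hK : Convex ℝ K := convex_convexHull ℝ _
  have exp_mem : ∀ t ∈ Icc (-δ) δ, (Real.cos t : ℂ) + Real.sin t • I ∈ K := fun t ht =>
    exp_I_mul_ofReal_eq_cos_add_sin t ▸ subset_convexHull ℝ _ ⟨t, ht, rfl⟩
  have hnormSq : y.re ^ 2 + y.im ^ 2 ≤ 1 := by
    have hsq := Complex.sq_norm y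
    rw [normSq_apply] at hsq
    nlinarith [norm_nonneg y]
  obtain ⟨hb₁, hb₂⟩ : -Real.sin δ ≤ y.im ∧ y.im ≤ Real.sin δ :=
    abs_le_of_sq_le_sq' (by nlinarith [Real.sin_sq_add_cos_sq δ,
      Real.cos_nonneg_of_mem_Icc ⟨by linarith, hδ⟩])
      (Real.sin_nonneg_of_nonneg_of_le_pi hδ₀ (by linarith))
  have hchord : (Real.cos δ : ℂ) + y.im • I ∈ K := by
    have hvert := hK.segment_subset (exp_mem (-δ) ⟨le_rfl, by linarith⟩)
      (exp_mem δ ⟨by linarith, le_rfl⟩)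
    rw [Real.cos_neg, Real.sin_neg] at hvert
    exact hvert (add_smul_mem_segment _ I ⟨hb₁, hb₂⟩)
  have hb : y.im ∈ Icc (-1) 1 :=
    ⟨by linarith [Real.sin_le_one δ], hb₂.trans (Real.sin_le_one δ)⟩
  have hδ' : δ ∈ Icc (-(Real.pi / 2)) (Real.pi / 2) := ⟨by linarith [Real.pi_pos], hδ⟩
  have harcsin : Real.arcsin y.im ∈ Icc (-δ) δ :=
    ⟨(Real.le_arcsin_iff_sin_le ⟨by linarith, by linarith⟩ hb).mpr (by rwa [Real.sin_neg]),
      (Real.arcsin_le_iff_le_sin hb hδ').mpr hb₂⟩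
  have hre : y.re ∈ Icc (Real.cos δ) (Real.cos (Real.arcsin y.im)) :=
    ⟨hyre, by rw [Real.cos_arcsin]; exact Real.le_sqrt_of_sq_le (by linarith)⟩
  have hhoriz := hK.segment_subset hchord (exp_mem _ harcsin)
  rw [Real.sin_arcsin hb.1 hb.2] at hhoriz
  apply hhoriz
  have hy_mem := add_smul_mem_segment (y.im • I) (1 : ℂ) hre
  simp only [real_smul, mul_one] at hy_mem ⊢
  rwa [add_comm _ (y.re : ℂ), re_add_im, add_comm _ (Real.cos δ : ℂ),
    add_comm _ (Real.cos (Real.arcsin y.im) : ℂ)] at hy_mem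

lemma convexHull_arc_neg_self (hδ₀ : 0 ≤ δ) (hδ : δ ≤ Real.pi / 2) :
    convexHull ℝ (arc (-δ) δ) = circularSegment 1 (Real.cos δ) :=
  (convexHull_min (arc_subset_circularSegment_one (by linarith [Real.pi_pos]))
    (convex_circularSegment 1 _)).antisymm (circularSegment_one_subset_convexHull_arc hδ₀ hδ)

end SymmetricArc

theorem stmt9 (l u : ℝ) (h₀ : 0 < u - l) (hπ : u - l < Real.pi) :
    convexHull ℝ (arc l u) =
      {x : ℂ | ‖x‖ ≤ 1 ∧
        Real.cos ((u - l) / 2) ^ 2 ≤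
          ((starRingEnd ℂ) x *
            ((Complex.exp (Complex.I * u) + Complex.exp (Complex.I * l)) / 2)).re} := by
  set δ := (u - l) / 2 with hδ_def
  set w := exp (I * ((l + u) / 2 : ℝ))
  have hδ₀ : 0 < δ := half_pos h₀
  have hδ : δ < Real.pi / 2 := by linarith
  have hcos : 0 < Real.cos δ := Real.cos_pos_of_mem_Ioo ⟨by linarith, hδ⟩
  have hrot : arc l u = (w * ·) '' arc (-δ) δ := by
    rw [← arc_add]; congr 1 <;> ring
  calc convexHull ℝ (arc l u) = (w * ·) '' convexHull ℝ (arc (-δ) δ) := by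
        rw [hrot]; exact ((LinearMap.mulLeft ℝ w).image_convexHull _).symm
    _ = circularSegment w (Real.cos δ) := by
        rw [convexHull_arc_neg_self hδ₀.le hδ.le,
          image_mul_circularSegment (norm_exp_I_mul_ofReal _), mul_one]
    _ = circularSegment (Real.cos δ * w) (Real.cos δ * Real.cos δ) :=
        (circularSegment_ofReal_mul hcos _ _).symm
    _ = _ := by
        rw [exp_I_mul_add_exp_I_mul, mul_assoc, mul_div_cancel_left₀ _ two_ne_zero, ← sq]; rfl
end

section
/- (Lemma 1, ε–δ form.) Let H ∈ ℂ^{K×N} and s ∈ ℂ^{K}. For every δ > 0 there exists η > 0 such that: for all l, u : {1,…,N} → ℝ with 0 ≤ u_n − l_n ≤ η for every n, and all x, y ∈ ℂ^{N} whose entries x_n, y_n both lie in the convex hull (over ℝ) of the arc arc(l_n, u_n) = {e^{it} : t ∈ [l_n, u_n]} ⊆ ℂ for every n, one has |‖Hx − s‖² − ‖Hy − s‖²| ≤ δ. In words, as the maximum angular width of the subregions tends to zero, the gap between the upper and lower bounds of the branch-and-bound subproblem tends uniformly to zero. -/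
open Matrix

/-!
Every point of the convex hull of `arc l u` lies in the unit disc and within `u - l` of the
endpoint `e^{il}`, because the chord between two points of the circle is no longer than the
arc between them. So two vectors with entries in the same hulls of arcs of width at most `η`
are `2η√N`-close in the Euclidean norm and have norm at most `√N`. Finally
`z ↦ ‖Hz - s‖²` is Lipschitz on bounded sets, since `‖a‖² - ‖b‖² = (‖a‖ + ‖b‖)(‖a‖ - ‖b‖)`.
-/

open Complex Metric

lemma norm_cexp_I_mul_sub_cexp_I_mul_le (a b : ℝ) :
    ‖cexp (I * a) - cexp (I * b)‖ ≤ |a - b| := by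
  have hfactor : cexp (I * a) - cexp (I * b) = cexp (I * b) * (cexp (I * ↑(a - b)) - 1) := by
    rw [mul_sub, ← Complex.exp_add]; push_cast; ring_nf
  rw [hfactor, norm_mul, mul_comm I, norm_exp_ofReal_mul_I, one_mul]
  exact Real.norm_exp_I_mul_ofReal_sub_one_le

lemma convexHull_arc_subset_closedBall_zero (l u : ℝ) :
    convexHull ℝ (arc l u) ⊆ closedBall 0 1 :=
  convexHull_min (by rintro _ ⟨t, -, rfl⟩; simp [mul_comm I, norm_exp_ofReal_mul_I])
    (convex_closedBall 0 1)

lemma convexHull_arc_subset_closedBall (l u : ℝ) :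
    convexHull ℝ (arc l u) ⊆ closedBall (cexp (I * l)) (u - l) := by
  refine convexHull_min ?_ (convex_closedBall _ _)
  rintro _ ⟨t, ⟨hlt, htu⟩, rfl⟩
  rw [mem_closedBall, dist_eq_norm]
  calc _ ≤ |t - l| := norm_cexp_I_mul_sub_cexp_I_mul_le t l
    _ ≤ u - l := by rw [abs_of_nonneg (sub_nonneg.2 hlt)]; linarith

lemma dist_le_of_mem_convexHull_arc {l u : ℝ} {z w : ℂ} (hz : z ∈ convexHull ℝ (arc l u))
    (hw : w ∈ convexHull ℝ (arc l u)) : dist z w ≤ 2 * (u - l) := by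
  have hz' := mem_closedBall.1 (convexHull_arc_subset_closedBall l u hz)
  have hw' := mem_closedBall.1 (convexHull_arc_subset_closedBall l u hw)
  linarith [dist_triangle_right z w (cexp (I * l))]

lemma EuclideanSpace.norm_le_sqrt_card_mul {ι 𝕜 : Type*} [Fintype ι] [RCLike 𝕜]
    {v : EuclideanSpace 𝕜 ι} {c : ℝ} (hc : 0 ≤ c) (h : ∀ i, ‖v i‖ ≤ c) :
    ‖v‖ ≤ √(Fintype.card ι) * c := by
  calc ‖v‖ = √(∑ i, ‖v i‖ ^ 2) := EuclideanSpace.norm_eq v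
    _ ≤ √(∑ _i : ι, c ^ 2) := by gcongr with i; exact h i
    _ = √(Fintype.card ι) * c := by
      rw [Finset.sum_const, Finset.card_univ, nsmul_eq_mul, Real.sqrt_mul (Nat.cast_nonneg _),
        Real.sqrt_sq hc]

lemma abs_sq_norm_sub_sq_norm_le {E : Type*} [SeminormedAddCommGroup E] {a b : E} {M : ℝ}
    (ha : ‖a‖ ≤ M) (hb : ‖b‖ ≤ M) : |‖a‖ ^ 2 - ‖b‖ ^ 2| ≤ 2 * M * ‖a - b‖ := by
  rw [sq_sub_sq, abs_mul, abs_of_nonneg (by positivity : 0 ≤ ‖a‖ + ‖b‖)]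
  exact mul_le_mul (by linarith) (abs_norm_sub_norm_le a b) (abs_nonneg _)
    (by linarith [norm_nonneg a])

lemma abs_sq_norm_apply_sub_sub_sq_norm_apply_sub_le {𝕜 E F : Type*} [NontriviallyNormedField 𝕜]
    [SeminormedAddCommGroup E] [NormedSpace 𝕜 E] [SeminormedAddCommGroup F] [NormedSpace 𝕜 F]
    (T : E →L[𝕜] F) (s : F) {x y : E} {r : ℝ} (hx : ‖x‖ ≤ r) (hy : ‖y‖ ≤ r) :
    |‖T x - s‖ ^ 2 - ‖T y - s‖ ^ 2| ≤ 2 * (‖T‖ * r + ‖s‖) * ‖T‖ * ‖x - y‖ := by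
  have hbound : ∀ z : E, ‖z‖ ≤ r → ‖T z - s‖ ≤ ‖T‖ * r + ‖s‖ := fun z hz =>
    (norm_sub_le _ _).trans (by gcongr; exact T.le_opNorm_of_le hz)
  calc _ ≤ 2 * (‖T‖ * r + ‖s‖) * ‖(T x - s) - (T y - s)‖ :=
        abs_sq_norm_sub_sq_norm_le (hbound x hx) (hbound y hy)
    _ = 2 * (‖T‖ * r + ‖s‖) * ‖T (x - y)‖ := by rw [sub_sub_sub_cancel_right, map_sub]
    _ ≤ 2 * (‖T‖ * r + ‖s‖) * (‖T‖ * ‖x - y‖) := by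
        gcongr
        · linarith [norm_nonneg (T x - s), hbound x hx]
        · exact T.le_opNorm _
    _ = 2 * (‖T‖ * r + ‖s‖) * ‖T‖ * ‖x - y‖ := by ring

theorem stmt14 {K N : ℕ} (H : Matrix (Fin K) (Fin N) ℂ) (s : EuclideanSpace ℂ (Fin K)) :
    ∀ δ : ℝ, 0 < δ → ∃ η : ℝ, 0 < η ∧
      ∀ l u : Fin N → ℝ, (∀ n, 0 ≤ u n - l n ∧ u n - l n ≤ η) →
        ∀ x y : EuclideanSpace ℂ (Fin N),
          (∀ n, x n ∈ convexHull ℝ (arc (l n) (u n)) ∧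
                y n ∈ convexHull ℝ (arc (l n) (u n))) →
          |‖Matrix.toEuclideanLin H x - s‖ ^ 2 - ‖Matrix.toEuclideanLin H y - s‖ ^ 2| ≤ δ := by
  intro δ hδ
  set T := LinearMap.toContinuousLinearMap (toEuclideanLin H)
  set R := √(N : ℝ)
  set L := 2 * (‖T‖ * R + ‖s‖) * ‖T‖ * (2 * R)
  refine ⟨δ / (L + 1), by positivity, fun l u hlu x y hxy => ?_⟩
  have hnorm : ∀ z : EuclideanSpace ℂ (Fin N),
      (∀ n, z n ∈ convexHull ℝ (arc (l n) (u n))) → ‖z‖ ≤ R := fun z hz => by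
    simpa [R] using EuclideanSpace.norm_le_sqrt_card_mul zero_le_one fun n =>
      mem_closedBall_zero_iff.1 (convexHull_arc_subset_closedBall_zero _ _ (hz n))
  have hclose : ‖x - y‖ ≤ R * (2 * (δ / (L + 1))) := by
    refine (EuclideanSpace.norm_le_sqrt_card_mul (c := 2 * (δ / (L + 1))) (by positivity)
      fun n => ?_).trans_eq (by simp [R])
    rw [PiLp.sub_apply, ← dist_eq_norm]
    linarith [dist_le_of_mem_convexHull_arc (hxy n).1 (hxy n).2, (hlu n).2]
  calc _ ≤ 2 * (‖T‖ * R + ‖s‖) * ‖T‖ * ‖x - y‖ :=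
        abs_sq_norm_apply_sub_sub_sq_norm_apply_sub_le T s (hnorm x fun n => (hxy n).1)
          (hnorm y fun n => (hxy n).2)
    _ ≤ 2 * (‖T‖ * R + ‖s‖) * ‖T‖ * (R * (2 * (δ / (L + 1)))) := by gcongr
    _ = L * δ / (L + 1) := by ring
    _ ≤ δ := by rw [div_le_iff₀ (by positivity)]; nlinarith
end

section
/- (Correctness of the arc projector PR₁, endpoint case.) Let l, u ∈ ℝ with 0 ≤ u − l ≤ 2π, let r > 0 and θ ∈ ℝ with u ≤ θ ≤ (l + u)/2 + π, and set x = r·e^{iθ}. Then for every t ∈ [l, u]: |x − e^{iu}| ≤ |x − e^{it}|, i.e. the nearest point to x on the arc arc(l,u) = {e^{it} : t ∈ [l, u]} is the endpoint e^{iu}. -/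
/-!
Since ‖r e^{iθ} - e^{is}‖² = r² + 1 - 2r cos(θ - s) and r > 0, it suffices to show
cos(θ - t) ≤ cos(θ - u). By sum-to-product the difference is
2 sin(θ - (t + u)/2) sin((u - t)/2), and the hypotheses put both arguments in [0, π].
-/

open Complex

theorem norm_ofReal_mul_exp_sub_exp_sq (r θ s : ℝ) :
    ‖(r : ℂ) * exp (I * θ) - exp (I * s)‖ ^ 2 = r ^ 2 + 1 - 2 * r * Real.cos (θ - s) := by
  rw [Complex.sq_norm, Complex.normSq_apply]
  simp only [sub_re, sub_im, mul_comm I, exp_mul_I, ← ofReal_cos, ← ofReal_sin, mul_re, mul_im,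
    add_re, add_im, ofReal_re, ofReal_im, I_re, I_im]
  rw [Real.cos_sub]
  linear_combination r ^ 2 * Real.sin_sq_add_cos_sq θ + Real.sin_sq_add_cos_sq s

theorem norm_ofReal_mul_exp_sub_exp_le_of_cos_le {r θ t u : ℝ} (hr : 0 ≤ r)
    (hcos : Real.cos (θ - t) ≤ Real.cos (θ - u)) :
    ‖(r : ℂ) * exp (I * θ) - exp (I * u)‖ ≤ ‖(r : ℂ) * exp (I * θ) - exp (I * t)‖ := by
  rw [← sq_le_sq₀ (norm_nonneg _) (norm_nonneg _), norm_ofReal_mul_exp_sub_exp_sq,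
    norm_ofReal_mul_exp_sub_exp_sq]
  nlinarith

open Real in
theorem Real.cos_sub_le_cos_sub {t u θ : ℝ} (htu : t ≤ u) (huθ : u ≤ θ)
    (hθ : θ ≤ (t + u) / 2 + π) : cos (θ - t) ≤ cos (θ - u) := by
  have hdiff : cos (θ - u) - cos (θ - t) = 2 * sin (θ - (t + u) / 2) * sin ((u - t) / 2) := by
    rw [cos_sub_cos, show (θ - u - (θ - t)) / 2 = -((u - t) / 2) by ring, sin_neg,
      show (θ - u + (θ - t)) / 2 = θ - (t + u) / 2 by ring]
    ring
  have hmid : 0 ≤ sin (θ - (t + u) / 2) :=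
    sin_nonneg_of_nonneg_of_le_pi (by linarith) (by linarith)
  have hhalf : 0 ≤ sin ((u - t) / 2) :=
    sin_nonneg_of_nonneg_of_le_pi (by linarith) (by linarith)
  nlinarith [mul_nonneg hmid hhalf]

theorem stmt15_general (l u : ℝ)
    (r : ℝ) (hr : 0 < r) (θ : ℝ) (hθl : u ≤ θ) (hθu : θ ≤ (l + u) / 2 + Real.pi)
    (x : ℂ) (hx : x = (r : ℂ) * Complex.exp (Complex.I * θ)) :
    ∀ t ∈ Set.Icc l u,
      ‖x - Complex.exp (Complex.I * u)‖ ≤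
        ‖x - Complex.exp (Complex.I * t)‖ := by
  rintro t ⟨hlt, htu⟩
  subst hx
  exact norm_ofReal_mul_exp_sub_exp_le_of_cos_le hr.le
    (Real.cos_sub_le_cos_sub htu hθl (by linarith))

theorem stmt15 (l u : ℝ) (h₀ : 0 ≤ u - l) (h₂π : u - l ≤ 2 * Real.pi)
    (r : ℝ) (hr : 0 < r) (θ : ℝ) (hθl : u ≤ θ) (hθu : θ ≤ (l + u) / 2 + Real.pi)
    (x : ℂ) (hx : x = (r : ℂ) * Complex.exp (Complex.I * θ)) :
    ∀ t ∈ Set.Icc l u,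
      ‖x - Complex.exp (Complex.I * u)‖ ≤
        ‖x - Complex.exp (Complex.I * t)‖ :=
  stmt15_general l u r hr θ hθl hθu x hx
end

section
/- (Correctness of the projector PR₂ in the chord region.) Let l, u ∈ ℝ with 0 < u − l < π, and set A = e^{il}, B = e^{iu}, T = (A + B)/2 (so T ≠ 0). Let X ∈ ℂ satisfy Re( conj(T)·(X − T) ) ≤ 0, Re( conj(A − B)·(X − A) ) ≤ 0, and Re( conj(B − A)·(X − B) ) ≤ 0. Define X_T = X − ( Re( conj(T)·(X − T) ) / |T|² )·T, the orthogonal projection of X onto the chord line through A and B. Then X_T belongs to the convex hull (over ℝ) of the arc arc(l,u) = {e^{it} : t ∈ [l, u]} ⊆ ℂ, and for every q in that convex hull, |X − X_T| ≤ |X − q|; that is, X_T is the nearest point of the convex hull to X. -/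
open RealInnerProductSpace ComplexConjugate

section HalfSpace

variable {F : Type*} [NormedAddCommGroup F] [InnerProductSpace ℝ F]

/-- Orthogonal projection of `X` onto the affine hyperplane `{y | ⟪v, y - T⟫ = 0}`
(junk value `X` when `v = 0`). -/
noncomputable def hyperplaneProj (v T X : F) : F :=
  X - (⟪v, X - T⟫ / ‖v‖ ^ 2) • v

theorem sub_hyperplaneProj (v T X : F) :
    X - hyperplaneProj v T X = (⟪v, X - T⟫ / ‖v‖ ^ 2) • v :=
  sub_sub_cancel _ _

theorem inner_hyperplaneProj_sub (v T X : F) : ⟪v, hyperplaneProj v T X - T⟫ = 0 := by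
  rcases eq_or_ne v 0 with rfl | hv
  · simp
  have : ‖v‖ ^ 2 ≠ 0 := by positivity
  rw [hyperplaneProj, sub_right_comm, inner_sub_right, inner_smul_right, real_inner_self_eq_norm_sq,
    div_mul_cancel₀ _ this, sub_self]

theorem convex_setOf_inner_sub_nonneg (v T : F) : Convex ℝ {z | 0 ≤ ⟪v, z - T⟫} := by
  simp_rw [inner_sub_right, sub_nonneg]
  exact convex_halfSpace_ge (innerₛₗ ℝ v).isLinear _

theorem norm_sub_hyperplaneProj_le {v T X q : F} (hX : ⟪v, X - T⟫ ≤ 0) (hq : 0 ≤ ⟪v, q - T⟫) :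
    ‖X - hyperplaneProj v T X‖ ≤ ‖X - q‖ := by
  set P := hyperplaneProj v T X
  have hs : ⟪v, X - T⟫ / ‖v‖ ^ 2 ≤ 0 := div_nonpos_of_nonpos_of_nonneg hX (by positivity)
  have hcross : 0 ≤ ⟪X - P, P - q⟫ := by
    rw [sub_hyperplaneProj, real_inner_smul_left, ← sub_sub_sub_cancel_right _ q T,
      inner_sub_right v (P - T), inner_hyperplaneProj_sub, zero_sub]
    exact mul_nonneg_of_nonpos_of_nonpos hs (neg_nonpos.2 hq)
  refine le_of_sq_le_sq ?_ (norm_nonneg _)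
  rw [← sub_add_sub_cancel X P q, norm_add_sq_real]
  nlinarith [sq_nonneg ‖P - q‖]

theorem mem_segment_of_inner_nonpos {A B P : F} {r : ℝ} (hAB : A ≠ B) (hP : P - A = r • (B - A))
    (hA : ⟪A - B, P - A⟫ ≤ 0) (hB : ⟪B - A, P - B⟫ ≤ 0) : P ∈ segment ℝ A B := by
  have hpos : 0 < ‖B - A‖ ^ 2 := pow_pos (norm_pos_iff.2 (sub_ne_zero.2 hAB.symm)) 2
  have hPB : P - B = (r - 1) • (B - A) := by rw [sub_smul, one_smul, ← hP]; abel
  rw [hP, ← neg_sub B A, inner_neg_left, inner_smul_right, real_inner_self_eq_norm_sq] at hA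
  rw [hPB, inner_smul_right, real_inner_self_eq_norm_sq] at hB
  rw [segment_eq_image']
  refine ⟨r, ⟨?_, ?_⟩, by simp only [← hP]; abel⟩ <;> nlinarith

end HalfSpace

namespace Complex

theorem re_conj_mul (w z : ℂ) : (conj w * z).re = ⟪w, z⟫ := by
  rw [Complex.inner, mul_comm]

theorem exists_eq_real_smul_of_inner_eq_zero {T v w : ℂ} (hT : T ≠ 0) (hv : v ≠ 0)
    (hTv : ⟪T, v⟫ = 0) (hTw : ⟪T, w⟫ = 0) : ∃ r : ℝ, w = r • v := by
  rw [Complex.inner] at hTv hTw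
  have hvI : v * conj T = (v * conj T).im * I := by
    conv_lhs => rw [← re_add_im (v * conj T), hTv]
    simp
  have hwI : w * conj T = (w * conj T).im * I := by
    conv_lhs => rw [← re_add_im (w * conj T), hTw]
    simp
  have hT' : conj T ≠ 0 := by simpa using hT
  have hb : (v * conj T).im ≠ 0 := by
    intro h
    rw [h] at hvI
    simp [hv, hT'] at hvI
  refine ⟨(w * conj T).im / (v * conj T).im, mul_right_cancel₀ hT' ?_⟩
  rw [real_smul, mul_assoc]
  generalize (v * conj T).im = b at hvI hb ⊢
  generalize (w * conj T).im = a at hwI ⊢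
  have hb' : (b : ℂ) ≠ 0 := ofReal_ne_zero.2 hb
  rw [hvI, hwI]
  push_cast
  field_simp

theorem hyperplaneProj_mem_segment {A B T X : ℂ} (hT : T = (A + B) / 2) (hT0 : T ≠ 0)
    (hAB : A ≠ B) (hnorm : ‖A‖ = ‖B‖) (hXA : ⟪A - B, X - A⟫ ≤ 0) (hXB : ⟪B - A, X - B⟫ ≤ 0) :
    hyperplaneProj T T X ∈ segment ℝ A B := by
  set P := hyperplaneProj T T X
  have hTBA : ⟪T, B - A⟫ = 0 := by
    rw [show T = (2 : ℝ)⁻¹ • (B + A) by rw [hT, real_smul]; push_cast; ring, real_inner_smul_left,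
      (real_inner_add_sub_eq_zero_iff B A).2 hnorm.symm, mul_zero]
  have hTAB : ⟪T, A - B⟫ = 0 := by rw [← neg_sub, inner_neg_right, hTBA, neg_zero]
  have hXP : ∀ v, ⟪T, v⟫ = 0 → ⟪v, X - P⟫ = 0 := by
    intro v hv
    rw [sub_hyperplaneProj, inner_smul_right, real_inner_comm T v, hv, mul_zero]
  have hTPA : ⟪T, P - A⟫ = 0 := by
    have hTA : T - A = (2 : ℝ)⁻¹ • (B - A) := by rw [hT, real_smul]; push_cast; ring
    rw [← sub_add_sub_cancel P T A, inner_add_right, inner_hyperplaneProj_sub, hTA,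
      inner_smul_right, hTBA, mul_zero, add_zero]
  obtain ⟨r, hr⟩ := exists_eq_real_smul_of_inner_eq_zero hT0 (sub_ne_zero.2 hAB.symm) hTBA hTPA
  refine mem_segment_of_inner_nonpos hAB hr ?_ ?_
  · rwa [← sub_add_sub_cancel X P A, inner_add_right, hXP _ hTAB, zero_add] at hXA
  · rwa [← sub_add_sub_cancel X P B, inner_add_right, hXP _ hTBA, zero_add] at hXB

theorem inner_exp_I_mul (a b : ℝ) : ⟪exp (I * a), exp (I * b)⟫ = Real.cos (b - a) := by
  rw [Complex.inner, ← exp_conj, ← exp_add]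
  simp only [map_mul, conj_I, conj_ofReal]
  rw [show I * b + -I * a = ((b - a : ℝ) : ℂ) * I by push_cast; ring, exp_ofReal_mul_I_re]

theorem exp_I_mul_add_exp_I_mul_div_two (l u : ℝ) :
    (exp (I * l) + exp (I * u)) / 2 = Real.cos ((u - l) / 2) • exp (I * ((l + u) / 2 : ℝ)) := by
  rw [real_smul, ofReal_cos, cos, div_mul_eq_mul_div, add_mul, ← exp_add, ← exp_add, add_comm]
  congr 3 <;> push_cast <;> ring

theorem exp_I_mul_add_exp_I_mul_div_two_ne_zero {l u : ℝ} (h₁ : -Real.pi < u - l)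
    (h₂ : u - l < Real.pi) : (exp (I * l) + exp (I * u)) / 2 ≠ 0 := by
  rw [exp_I_mul_add_exp_I_mul_div_two]
  exact smul_ne_zero (Real.cos_pos_of_mem_Ioo ⟨by linarith, by linarith⟩).ne' (exp_ne_zero _)

theorem exp_I_mul_ne_exp_I_mul {l u : ℝ} (h₀ : u - l ≠ 0) (h₁ : -(2 * Real.pi) < u - l)
    (h₂ : u - l < 2 * Real.pi) : exp (I * l) ≠ exp (I * u) := by
  intro h
  have hcos := inner_exp_I_mul l u
  rw [← h, real_inner_self_eq_norm_sq, norm_exp_I_mul_ofReal, one_pow, eq_comm,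
    Real.cos_eq_one_iff_of_lt_of_lt h₁ h₂] at hcos
  exact h₀ hcos

end Complex

open Complex in
theorem arc_subset_inner_sub_nonneg {l u : ℝ} (hlu : u - l ≤ Real.pi) :
    arc l u ⊆ {z | 0 ≤ ⟪(exp (I * l) + exp (I * u)) / 2, z - (exp (I * l) + exp (I * u)) / 2⟫} := by
  rintro _ ⟨t, ⟨hlt, htu⟩, rfl⟩
  rw [Set.mem_ofPred_eq, exp_I_mul_add_exp_I_mul_div_two, inner_sub_right, real_inner_smul_left,
    real_inner_smul_left, real_inner_smul_right, inner_exp_I_mul, inner_exp_I_mul, sub_self,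
    Real.cos_zero, mul_one, ← mul_sub]
  refine mul_nonneg (Real.cos_nonneg_of_neg_pi_div_two_le_of_le (by linarith) (by linarith))
    (sub_nonneg.2 ?_)
  rw [← Real.cos_abs (t - _)]
  exact Real.cos_le_cos_of_nonneg_of_le_pi (abs_nonneg _) (by linarith)
    (abs_le.2 ⟨by linarith, by linarith⟩)

theorem stmt16 (l u : ℝ) (h₀ : 0 < u - l) (hπ : u - l < Real.pi)
    (A B T : ℂ) (hA : A = Complex.exp (Complex.I * l)) (hB : B = Complex.exp (Complex.I * u))
    (hT : T = (A + B) / 2)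
    (X : ℂ)
    (h₁ : ((starRingEnd ℂ) T * (X - T)).re ≤ 0)
    (h₄ : ((starRingEnd ℂ) (A - B) * (X - A)).re ≤ 0)
    (h₅ : ((starRingEnd ℂ) (B - A) * (X - B)).re ≤ 0)
    (XT : ℂ)
    (hXT : XT = X - ((((starRingEnd ℂ) T * (X - T)).re / ‖T‖ ^ 2) : ℝ) • T) :
    XT ∈ convexHull ℝ (arc l u) ∧
      ∀ q ∈ convexHull ℝ (arc l u), ‖X - XT‖ ≤ ‖X - q‖ := by
  rw [Complex.re_conj_mul] at h₁ h₄ h₅ hXT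
  subst hA hB
  have hAarc : Complex.exp (Complex.I * l) ∈ arc l u := ⟨l, ⟨le_rfl, by linarith⟩, rfl⟩
  have hBarc : Complex.exp (Complex.I * u) ∈ arc l u := ⟨u, ⟨by linarith, le_rfl⟩, rfl⟩
  have hT0 : T ≠ 0 := hT ▸ Complex.exp_I_mul_add_exp_I_mul_div_two_ne_zero (by linarith) hπ
  have hAB := Complex.exp_I_mul_ne_exp_I_mul h₀.ne' (by linarith) (by linarith)
  have hnorm : ‖Complex.exp (Complex.I * l)‖ = ‖Complex.exp (Complex.I * u)‖ := by
    rw [Complex.norm_exp_I_mul_ofReal, Complex.norm_exp_I_mul_ofReal]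
  have hull : convexHull ℝ (arc l u) ⊆ {z | 0 ≤ ⟪T, z - T⟫} :=
    convexHull_min (hT ▸ arc_subset_inner_sub_nonneg hπ.le) (convex_setOf_inner_sub_nonneg T T)
  rw [show XT = hyperplaneProj T T X from hXT]
  exact ⟨segment_subset_convexHull hAarc hBarc
      (Complex.hyperplaneProj_mem_segment hT hT0 hAB hnorm h₄ h₅),
    fun q hq => norm_sub_hyperplaneProj_le h₁ (hull hq)⟩
end

section
/- (Correctness of the projector PR₂ in the normalization region.) Let l, u ∈ ℝ with 0 ≤ u − l ≤ 2π, let r ≥ 1 and θ ∈ [l, u], and set X = r·e^{iθ}. Then e^{iθ} belongs to the convex hull (over ℝ) of the arc arc(l,u) = {e^{it} : t ∈ [l, u]} ⊆ ℂ, and for every q in that convex hull, |X − e^{iθ}| ≤ |X − q|; i.e. for points outside the unit circle whose argument lies in [l,u], the nearest point of the convex hull of the arc is the normalization X/|X| = e^{iθ}. -/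
theorem norm_smul_sub_self_le_norm_smul_sub {E : Type*} [SeminormedAddCommGroup E]
    [NormedSpace ℝ E] {v q : E} (hv : ‖v‖ = 1) (hq : ‖q‖ ≤ 1) {r : ℝ} (hr : 1 ≤ r) :
    ‖r • v - v‖ ≤ ‖r • v - q‖ :=
  calc ‖r • v - v‖ = ‖(r - 1) • v‖ := by rw [sub_smul, one_smul]
    _ = r - 1 := by
        rw [norm_smul, hv, mul_one, Real.norm_of_nonneg (by linarith)]
    _ ≤ ‖r • v‖ - ‖q‖ := by
        rw [norm_smul, hv, mul_one, Real.norm_of_nonneg (by linarith)]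
        linarith
    _ ≤ ‖r • v - q‖ := norm_sub_norm_le _ _

theorem norm_exp_I_mul_ofReal (t : ℝ) : ‖Complex.exp (Complex.I * t)‖ = 1 := by
  rw [mul_comm]
  exact Complex.norm_exp_ofReal_mul_I t

theorem convexHull_arc_subset_closedBall_s17 (l u : ℝ) :
    convexHull ℝ (arc l u) ⊆ Metric.closedBall 0 1 := by
  refine convexHull_min ?_ (convex_closedBall 0 1)
  rintro _ ⟨t, -, rfl⟩
  exact mem_closedBall_zero_iff.mpr (norm_exp_I_mul_ofReal t).le

theorem stmt17_general (l u : ℝ)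
    (r : ℝ) (hr : 1 ≤ r) (θ : ℝ) (hθ : θ ∈ Set.Icc l u)
    (X : ℂ) (hX : X = (r : ℂ) * Complex.exp (Complex.I * θ)) :
    Complex.exp (Complex.I * θ) ∈ convexHull ℝ (arc l u) ∧
      ∀ q ∈ convexHull ℝ (arc l u),
        ‖X - Complex.exp (Complex.I * θ)‖ ≤ ‖X - q‖ := by
  refine ⟨subset_convexHull ℝ _ ⟨θ, hθ, rfl⟩, fun q hq => ?_⟩
  rw [hX, ← Complex.real_smul]
  exact norm_smul_sub_self_le_norm_smul_sub (norm_exp_I_mul_ofReal θ)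
    (mem_closedBall_zero_iff.mp (convexHull_arc_subset_closedBall_s17 l u hq)) hr

theorem stmt17 (l u : ℝ) (h₀ : 0 ≤ u - l) (h₂π : u - l ≤ 2 * Real.pi)
    (r : ℝ) (hr : 1 ≤ r) (θ : ℝ) (hθ : θ ∈ Set.Icc l u)
    (X : ℂ) (hX : X = (r : ℂ) * Complex.exp (Complex.I * θ)) :
    Complex.exp (Complex.I * θ) ∈ convexHull ℝ (arc l u) ∧
      ∀ q ∈ convexHull ℝ (arc l u),
        ‖X - Complex.exp (Complex.I * θ)‖ ≤ ‖X - q‖ :=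
  stmt17_general l u r hr θ hθ X hX
end
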